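/- Let W ⊆ GL(h) be an irreducible complex reflection group with dim h = n, and let {s₁,…,s_k} be a conjugacy class of complex reflections in W whose nontrivial eigenvalue is ζ. Then the alternating form Ω = Σᵢ ω_{sᵢ} on h ⊕ h* equals (k/n)·(1−ζ)⁻¹(1−ζ⁻¹)⁻¹(2−ζ−ζ⁻¹)·ω, where ω is the standard symplectic form on h ⊕ h*. -/

import Mathlib

/-!
Each `π_i` splits as `P_i × P_iᵀ`, where `P_i` is the projection of `h` onto `Im(1 - s_i)` along
`Ker(1 - s_i)`; hence `Ω(x, y) = x.2 (T y.1) - y.2 (T x.1)` with `T = ∑ P_i`. Conjugation permutes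
the `P_i`, so `T` commutes with `W`, and Schur's lemma (applied to `Tᵀ` on `h*`) makes `T` a
scalar `c`. Every `P_i` has rank one, so `c n = tr T = k`. Finally
`(1 - ζ)(1 - ζ⁻¹) = 2 - ζ - ζ⁻¹`, so the constant in the statement is just `k / n`.
-/

open LinearMap

section Conjugation

variable {R M : Type*} [Ring R] [AddCommGroup M] [Module R M]

theorem LinearMap.range_mul_mul_of_mul_eq_one {u v : Module.End R M} (h : v * u = 1)
    (f : Module.End R M) : range (u * f * v) = (range f).map u := by
  have hv : Function.LeftInverse v u := fun x => LinearMap.congr_fun h x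
  rw [Module.End.mul_eq_comp, range_comp_of_range_eq_top _ (range_eq_top.mpr hv.surjective),
    Module.End.mul_eq_comp, range_comp]

theorem LinearMap.ker_mul_mul_of_mul_eq_one {u v : Module.End R M} (h : v * u = 1)
    (f : Module.End R M) : ker (u * f * v) = (ker f).comap v := by
  have hv : Function.LeftInverse v u := fun x => LinearMap.congr_fun h x
  rw [Module.End.mul_eq_comp, ker_comp, Module.End.mul_eq_comp,
    ker_comp_of_ker_eq_bot _ (ker_eq_bot.mpr hv.injective)]

end Conjugation

theorem Submodule.isCompl_prod_iff {R M N : Type*} [Ring R] [AddCommGroup M] [Module R M]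
    [AddCommGroup N] [Module R N] {A C : Submodule R M} {B D : Submodule R N} :
    IsCompl (A.prod B) (C.prod D) ↔ IsCompl A C ∧ IsCompl B D := by
  simp only [isCompl_iff, disjoint_iff, codisjoint_iff, Submodule.prod_inf_prod,
    Submodule.prod_sup_prod, Submodule.prod_eq_bot_iff, Submodule.prod_eq_top_iff]
  tauto

/-- `p` is the projection onto `range f` along `ker f`; for `f = 1 - s` this is the paper's `π_s`. -/
def IsProjRangeKer {R M : Type*} [Ring R] [AddCommGroup M] [Module R M]
    (p f : Module.End R M) : Prop :=
  IsIdempotentElem p ∧ range p = range f ∧ ker p = ker f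

namespace IsProjRangeKer

section Ring

variable {R M N : Type*} [Ring R] [AddCommGroup M] [Module R M] [AddCommGroup N] [Module R N]
  {p q f g : Module.End R M}

theorem unique (hp : IsProjRangeKer p f) (hq : IsProjRangeKer q f) : p = q :=
  hp.1.ext hq.1 ⟨hp.2.1.trans hq.2.1.symm, hp.2.2.trans hq.2.2.symm⟩

theorem congr (hp : IsProjRangeKer p f) (hr : range f = range g) (hk : ker f = ker g) :
    IsProjRangeKer p g :=
  ⟨hp.1, hp.2.1.trans hr, hp.2.2.trans hk⟩

theorem conj (hp : IsProjRangeKer p f) {u v : Module.End R M} (h : v * u = 1) :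
    IsProjRangeKer (u * p * v) (u * f * v) := by
  refine ⟨?_, by rw [range_mul_mul_of_mul_eq_one h, range_mul_mul_of_mul_eq_one h, hp.2.1],
    by rw [ker_mul_mul_of_mul_eq_one h, ker_mul_mul_of_mul_eq_one h, hp.2.2]⟩
  calc u * p * v * (u * p * v) = u * (p * (v * u) * p) * v := by noncomm_ring
    _ = u * p * v := by rw [h, mul_one, hp.1.eq, mul_assoc]

theorem exists_prodMap {p : Module.End R (M × N)} {f : Module.End R M} {g : Module.End R N}
    (hp : IsProjRangeKer p (f.prodMap g)) :
    ∃ p₁ p₂, IsProjRangeKer p₁ f ∧ IsProjRangeKer p₂ g ∧ p = p₁.prodMap p₂ := by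
  have hc := hp.1.isCompl
  rw [hp.2.1, hp.2.2, range_prodMap, ker_prodMap, Submodule.isCompl_prod_iff] at hc
  obtain ⟨hf, hg⟩ := hc
  have h₁ : IsProjRangeKer ((range f).projection (ker f) hf) f :=
    ⟨Submodule.isIdempotentElem_projection hf, Submodule.range_projection hf,
      Submodule.ker_projection hf⟩
  have h₂ : IsProjRangeKer ((range g).projection (ker g) hg) g :=
    ⟨Submodule.isIdempotentElem_projection hg, Submodule.range_projection hg,
      Submodule.ker_projection hg⟩
  refine ⟨_, _, h₁, h₂, hp.unique ⟨?_, ?_, ?_⟩⟩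
  · show _ = _
    rw [prodMap_mul, h₁.1.eq, h₂.1.eq]
  · rw [range_prodMap, range_prodMap, h₁.2.1, h₂.2.1]
  · rw [ker_prodMap, ker_prodMap, h₁.2.2, h₂.2.2]

end Ring

section Field

variable {K V : Type*} [Field K] [AddCommGroup V] [Module K V] {p f : Module.End K V}

theorem dualMap (hp : IsProjRangeKer p f) : IsProjRangeKer p.dualMap f.dualMap := by
  refine ⟨?_, ?_, ?_⟩
  · show _ = _
    rw [Module.End.mul_eq_comp, dualMap_comp_dualMap, ← Module.End.mul_eq_comp, hp.1.eq]
  · rw [range_dualMap_eq_dualAnnihilator_ker, range_dualMap_eq_dualAnnihilator_ker, hp.2.2]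
  · rw [ker_dualMap_eq_dualAnnihilator_range, ker_dualMap_eq_dualAnnihilator_range, hp.2.1]

theorem trace_eq [FiniteDimensional K V] (hp : IsProjRangeKer p f) :
    trace K V p = Module.finrank K (range f) := by
  rw [(hp.1.isProj_range _).trace, hp.2.1]

end Field

end IsProjRangeKer

section DualSpace

variable {K V : Type*} [Field K] [AddCommGroup V] [Module K V]

theorem LinearMap.dualMap_apply_apply_of_isIdempotentElem {P : Module.End K V}
    (hP : IsIdempotentElem P) (φ : Module.Dual K V) (v : V) : P.dualMap φ (P v) = φ (P v) := by
  rw [dualMap_apply, ← Module.End.mul_apply, hP.eq]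

theorem LinearMap.eq_smul_id_of_dualMap_eq {T : Module.End K V} {c : K}
    (h : T.dualMap = c • LinearMap.id) : T = c • LinearMap.id := by
  ext v
  rw [← sub_eq_zero, ← Module.forall_dual_apply_eq_zero_iff K]
  intro φ
  simpa [sub_eq_zero] using congr($h φ v)

theorem LinearMap.finrank_range_id_sub_eq_one [FiniteDimensional K V] {f : Module.End K V}
    (hV : 0 < Module.finrank K V)
    (hf : Module.finrank K (ker (f - LinearMap.id)) = Module.finrank K V - 1) :
    Module.finrank K (range (LinearMap.id - f)) = 1 := by
  have hker : ker (LinearMap.id - f) = ker (f - LinearMap.id) := by rw [← ker_neg, neg_sub]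
  have := (LinearMap.id - f).finrank_range_add_finrank_ker
  rw [hker, hf] at this
  omega

end DualSpace

namespace Representation

variable {K G V : Type*} [Field K] [Group G] [AddCommGroup V] [Module K V]
  (ρ : Representation K G V)

theorem id_sub_dual (g : G) : LinearMap.id - ρ.dual g = (LinearMap.id - ρ g⁻¹).dualMap := by
  ext; simp [Module.Dual.transpose_apply]

theorem range_id_sub_inv (g : G) :
    range (LinearMap.id - ρ g⁻¹) = range (LinearMap.id - ρ g) := by
  have hfac : LinearMap.id - ρ g⁻¹ = (LinearMap.id - ρ g) ∘ₗ (-ρ g⁻¹) := by ext; simp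
  rw [hfac, range_comp_of_range_eq_top]
  exact range_eq_top.mpr (neg_surjective.comp (ρ.apply_bijective g⁻¹).2)

theorem ker_id_sub_inv (g : G) :
    ker (LinearMap.id - ρ g⁻¹) = ker (LinearMap.id - ρ g) := by
  have hfac : LinearMap.id - ρ g⁻¹ = (-ρ g⁻¹) ∘ₗ (LinearMap.id - ρ g) := by ext; simp
  rw [hfac, ker_comp_of_ker_eq_bot]
  exact ker_eq_bot.mpr (neg_injective.comp (ρ.apply_bijective g⁻¹).1)

theorem exists_isProjRangeKer_prodMap_dualMap {π : Module.End K (V × Module.Dual K V)} {g : G}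
    (hπ : IsProjRangeKer π (LinearMap.id - (ρ g).prodMap (ρ.dual g))) :
    ∃ P, IsProjRangeKer P (LinearMap.id - ρ g) ∧ π = P.prodMap P.dualMap := by
  have hsplit : LinearMap.id - (ρ g).prodMap (ρ.dual g) =
      (LinearMap.id - ρ g).prodMap (LinearMap.id - ρ.dual g) := by
    ext <;> simp
  obtain ⟨P, Q, hP, hQ, rfl⟩ := (hsplit ▸ hπ).exists_prodMap
  have hPdual : IsProjRangeKer P.dualMap (LinearMap.id - ρ.dual g) := by
    rw [id_sub_dual]
    exact (hP.congr (ρ.range_id_sub_inv g).symm (ρ.ker_id_sub_inv g).symm).dualMap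
  exact ⟨P, hP, by rw [hQ.unique hPdual]⟩

theorem conj_eq_of_isProjRangeKer {P Q : Module.End K V} {g s t : G}
    (hP : IsProjRangeKer P (LinearMap.id - ρ s)) (hQ : IsProjRangeKer Q (LinearMap.id - ρ t))
    (hst : g * s * g⁻¹ = t) : ρ g * P * ρ g⁻¹ = Q := by
  have hconj : ρ g * (LinearMap.id - ρ s) * ρ g⁻¹ = LinearMap.id - ρ t := by
    ext; simp [← hst, Module.End.mul_apply]
  refine (hP.conj ?_).congr ?_ ?_ |>.unique hQ <;> simp [← map_mul, hconj]

theorem commute_sum_of_isProjRangeKer {ι : Type*} [Fintype ι] {P : ι → Module.End K V}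
    {s : ι → G} (hP : ∀ i, IsProjRangeKer (P i) (LinearMap.id - ρ (s i)))
    (hs : ∀ g, ∃ e : Equiv.Perm ι, ∀ i, g * s i * g⁻¹ = s (e i)) (g : G) :
    Commute (ρ g) (∑ i, P i) := by
  obtain ⟨e, he⟩ := hs g
  have hPe : ∀ i, ρ g * P i = P (e i) * ρ g := fun i => by
    rw [← conj_eq_of_isProjRangeKer ρ (hP i) (hP (e i)) (he i), mul_assoc _ (ρ g⁻¹), ← map_mul,
      inv_mul_cancel, map_one, mul_one]
  calc ρ g * ∑ i, P i = ∑ i, P (e i) * ρ g := by simp only [Finset.mul_sum, hPe]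
    _ = (∑ i, P i) * ρ g := by rw [← Finset.sum_mul, Equiv.sum_comp e P]

theorem dualMap_comp_dual_of_commute {T : Module.End K V} (hT : ∀ g, Commute (ρ g) T) (w : G) :
    T.dualMap ∘ₗ ρ.dual w = ρ.dual w ∘ₗ T.dualMap := by
  ext φ v
  simp only [comp_apply, dual_apply, Module.Dual.transpose_apply, dualMap_apply]
  exact congr(φ $(LinearMap.congr_fun (hT w⁻¹).eq v))

end Representation

theorem stmt1_general (W : Type*) [Group W]
    (h : Type*) [AddCommGroup h] [Module ℂ h] [FiniteDimensional ℂ h]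
    (n : ℕ) (hn : 0 < n) (hdim : Module.finrank ℂ h = n)
    (ρ : Representation ℂ W h)
    -- Schur's lemma for the (irreducible) dual reflection representation h*
    (hSchur : ∀ φ : Module.Dual ℂ h →ₗ[ℂ] Module.Dual ℂ h,
      (∀ w, φ ∘ₗ ρ.dual w = ρ.dual w ∘ₗ φ) → ∃ c : ℂ, φ = c • LinearMap.id)
    -- the diagonal action on h ⊕ h*
    (σ : W → (h × Module.Dual ℂ h) →ₗ[ℂ] (h × Module.Dual ℂ h))
    (hσ : ∀ w, σ w = LinearMap.prodMap (ρ w) (ρ.dual w))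
    -- the standard symplectic form
    (ω : (h × Module.Dual ℂ h) → (h × Module.Dual ℂ h) → ℂ)
    (hω : ∀ x y, ω x y = x.2 y.1 - y.2 x.1)
    -- the conjugacy class of reflections s₁, …, s_k with nontrivial eigenvalue ζ
    (k : ℕ) (s : Fin k → W)
    (hconj : ∀ g : W, ∃ e : Equiv.Perm (Fin k), ∀ i, g * s i * g⁻¹ = s (e i))
    (ζ : ℂ) (hζ1 : ζ ≠ 1) (hζ0 : ζ ≠ 0)
    (hrefl : ∀ i, Module.finrank ℂ (LinearMap.ker (ρ (s i) - LinearMap.id)) = n - 1)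
    -- the projections π_i onto Im(1 − s_i) along Ker(1 − s_i) in h ⊕ h*
    (π : Fin k → ((h × Module.Dual ℂ h) →ₗ[ℂ] (h × Module.Dual ℂ h)))
    (hπ : ∀ i, π i ∘ₗ π i = π i ∧
      LinearMap.range (π i) = LinearMap.range (LinearMap.id - σ (s i)) ∧
      LinearMap.ker (π i) = LinearMap.ker (LinearMap.id - σ (s i))) :
    ∀ x y, (∑ i, ω (π i x) (π i y)) =
      ((k : ℂ) / n) * (1 - ζ)⁻¹ * (1 - ζ⁻¹)⁻¹ * (2 - ζ - ζ⁻¹) * ω x y := by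
  intro x y
  choose P hP hπP using fun i =>
    ρ.exists_isProjRangeKer_prodMap_dualMap (hσ (s i) ▸ (hπ i : IsProjRangeKer (π i) _))
  set T := ∑ i, P i
  obtain ⟨c, hc⟩ :=
    hSchur T.dualMap (ρ.dualMap_comp_dual_of_commute (ρ.commute_sum_of_isProjRangeKer hP hconj))
  have hT : T = c • LinearMap.id := eq_smul_id_of_dualMap_eq hc
  have hc_eq : c = k / n := by
    have hrank (i : Fin k) : Module.finrank ℂ (range (LinearMap.id - ρ (s i))) = 1 :=
      finrank_range_id_sub_eq_one (hdim ▸ hn) (hdim ▸ hrefl i)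
    have htrace : trace ℂ h T = k := by simp [T, map_sum, (hP _).trace_eq, hrank]
    rw [hT, map_smul, trace_id, hdim, smul_eq_mul] at htrace
    rw [eq_div_iff (by exact_mod_cast hn.ne'), htrace]
  have hscalar : (1 - ζ)⁻¹ * (1 - ζ⁻¹)⁻¹ * (2 - ζ - ζ⁻¹) = 1 := by
    have h1ζ : 1 - ζ ≠ 0 := sub_ne_zero.mpr hζ1.symm
    field_simp
    ring
  have hterm (i : Fin k) : ω (π i x) (π i y) = x.2 (P i y.1) - y.2 (P i x.1) := by
    simp [hω, hπP i, dualMap_apply_apply_of_isIdempotentElem (hP i).1]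
  calc ∑ i, ω (π i x) (π i y) = x.2 (T y.1) - y.2 (T x.1) := by
        simp [hterm, T, LinearMap.sum_apply, Finset.sum_sub_distrib]
    _ = c * ω x y := by simp [hT, hω, mul_sub]
    _ = k / n * ((1 - ζ)⁻¹ * (1 - ζ⁻¹)⁻¹ * (2 - ζ - ζ⁻¹)) * ω x y := by
        rw [hscalar, mul_one, hc_eq]
    _ = _ := by ring

/-- Let `W ⊆ GL(h)` be an irreducible complex reflection group (given by a representation
`ρ` on the `n`-dimensional space `h`, with dual representation irreducible so that Schur's
lemma applies, and such that every `W`-invariant alternating bilinear form on `h ⊕ h*` is a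
multiple of the standard symplectic form `ω`, i.e. `dim (∧²(h ⊕ h*))^W = 1`), and let
`{s₁, …, s_k}` be a conjugacy class of complex reflections in `W` with nontrivial
eigenvalue `ζ`. With `π_i` the projection onto `Im(1 − s_i)` along `Ker(1 − s_i)` on
`h ⊕ h*` and `ω_{s_i} = ω ∘ (π_i × π_i)`, the alternating form `Ω = Σ_i ω_{s_i}` equals
`(k/n)(1−ζ)⁻¹(1−ζ⁻¹)⁻¹(2−ζ−ζ⁻¹)·ω`. -/
theorem stmt1 (W : Type*) [Group W]
    (h : Type*) [AddCommGroup h] [Module ℂ h] [FiniteDimensional ℂ h]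
    (n : ℕ) (hn : 0 < n) (hdim : Module.finrank ℂ h = n)
    (ρ : Representation ℂ W h)
    -- Schur's lemma for the (irreducible) dual reflection representation h*
    (hSchur : ∀ φ : Module.Dual ℂ h →ₗ[ℂ] Module.Dual ℂ h,
      (∀ w, φ ∘ₗ ρ.dual w = ρ.dual w ∘ₗ φ) → ∃ c : ℂ, φ = c • LinearMap.id)
    -- the diagonal action on h ⊕ h*
    (σ : W → (h × Module.Dual ℂ h) →ₗ[ℂ] (h × Module.Dual ℂ h))
    (hσ : ∀ w, σ w = LinearMap.prodMap (ρ w) (ρ.dual w))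
    -- the standard symplectic form
    (ω : (h × Module.Dual ℂ h) → (h × Module.Dual ℂ h) → ℂ)
    (hω : ∀ x y, ω x y = x.2 y.1 - y.2 x.1)
    -- the conjugacy class of reflections s₁, …, s_k with nontrivial eigenvalue ζ
    (k : ℕ) (hk : 0 < k) (s : Fin k → W)
    (hconj : ∀ g : W, ∃ e : Equiv.Perm (Fin k), ∀ i, g * s i * g⁻¹ = s (e i))
    (ζ : ℂ) (hζ1 : ζ ≠ 1) (hζ0 : ζ ≠ 0)
    (hrefl : ∀ i, Module.finrank ℂ (LinearMap.ker (ρ (s i) - LinearMap.id)) = n - 1)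
    (heig : ∀ i, ∃ v : h, v ≠ 0 ∧ ρ (s i) v = ζ • v)
    -- the projections π_i onto Im(1 − s_i) along Ker(1 − s_i) in h ⊕ h*
    (π : Fin k → ((h × Module.Dual ℂ h) →ₗ[ℂ] (h × Module.Dual ℂ h)))
    (hπ : ∀ i, π i ∘ₗ π i = π i ∧
      LinearMap.range (π i) = LinearMap.range (LinearMap.id - σ (s i)) ∧
      LinearMap.ker (π i) = LinearMap.ker (LinearMap.id - σ (s i)))
    -- dim (∧²(h ⊕ h*))^W = 1: every invariant alternating bilinear form is a multiple of ω
    (huniq : ∀ Ω : (h × Module.Dual ℂ h) →ₗ[ℂ] (h × Module.Dual ℂ h) →ₗ[ℂ] ℂ,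
      (∀ x, Ω x x = 0) → (∀ (w : W) x y, Ω (σ w x) (σ w y) = Ω x y) →
      ∃ c : ℂ, ∀ x y, Ω x y = c * ω x y) :
    ∀ x y, (∑ i, ω (π i x) (π i y)) =
      ((k : ℂ) / n) * (1 - ζ)⁻¹ * (1 - ζ⁻¹)⁻¹ * (2 - ζ - ζ⁻¹) * ω x y :=
  stmt1_general W h n hn hdim ρ hSchur σ hσ ω hω k s hconj ζ hζ1 hζ0 hrefl π hπ
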